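/- Let p ≥ 1, θ ∈ ℝ^p, σ > 0, and let X be a random vector in ℝ^p with the N(θ, σ²I) distribution. Let g : ℝ^p → ℝ^p be continuously differentiable with E‖g(X)‖² < ∞, E|(X-θ)·g(X)| < ∞ and E|∂g_i/∂x_i(X)| < ∞ for each i. Then the risk of the estimator X + σ²g(X) satisfies E‖X + σ²g(X) - θ‖² = E‖X-θ‖² + σ⁴ E[‖g(X)‖² + 2 div g(X)]. Consequently, if ‖g(x)‖² + 2 div g(x) ≤ 0 for all x, with strict inequality on a set of positive Lebesgue measure, then E‖X + σ²g(X) - θ‖² < E‖X-θ‖², i.e., X + σ²g(X) dominates X under squared error loss. (Proposition 3.1.) -/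

import Mathlib

open MeasureTheory Real
open scoped RealInnerProductSpace

/-- Divergence of a vector field on `EuclideanSpace ℝ (Fin p)`:
`div g x = ∑ i, ∂gᵢ/∂xᵢ (x)`. -/
noncomputable def vdiv {p : ℕ} (g : EuclideanSpace ℝ (Fin p) → EuclideanSpace ℝ (Fin p))
    (x : EuclideanSpace ℝ (Fin p)) : ℝ :=
  ∑ i, fderiv ℝ g x (EuclideanSpace.single i 1) i

/-- The density of the `N(θ, σ²I)` distribution on `EuclideanSpace ℝ (Fin p)` with respect to
Lebesgue measure. -/
noncomputable def gaussDensity {p : ℕ} (θ : EuclideanSpace ℝ (Fin p)) (σ : ℝ)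
    (x : EuclideanSpace ℝ (Fin p)) : ℝ :=
  (2 * π * σ ^ 2) ^ (-(p : ℝ) / 2) * Real.exp (-‖x - θ‖ ^ 2 / (2 * σ ^ 2))

/-!
Expanding the square, `‖X + σ²g(X) - θ‖² = ‖X - θ‖² + 2σ²⟪X - θ, g(X)⟫ + σ⁴‖g(X)‖²`, so the
risk identity reduces to Stein's identity `E⟪X - θ, g(X)⟫ = σ² E[div g(X)]`. Since the Gaussian
density `φ` satisfies `∂ᵢφ(x) = -(xᵢ - θᵢ) φ(x) / σ²`, each coordinate of Stein's identity is an
integration by parts `∫ gᵢ ∂ᵢφ = -∫ ∂ᵢgᵢ φ` along the `i`-th axis; the integrability hypotheses,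
together with `E‖X - θ‖² < ∞` and the AM-GM inequality, make every integral involved finite.
-/

section Integrable

variable {α : Type*} [MeasurableSpace α] {μ : Measure α}

lemma MeasureTheory.Integrable.mul_of_abs_mul {f w : α → ℝ} (hf : AEStronglyMeasurable f μ)
    (hw : AEStronglyMeasurable w μ) (hw0 : ∀ x, 0 ≤ w x)
    (h : Integrable (fun x => |f x| * w x) μ) : Integrable (fun x => f x * w x) μ :=
  h.mono' (hf.mul hw) (.of_forall fun x => by rw [norm_mul, norm_of_nonneg (hw0 x), norm_eq_abs])

lemma MeasureTheory.Integrable.mul_mul_of_abs_le {u v w U W : α → ℝ} (hu : AEStronglyMeasurable u μ)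
    (hv : AEStronglyMeasurable v μ) (hw : AEStronglyMeasurable w μ) (hw0 : ∀ x, 0 ≤ w x)
    (huU : ∀ x, |u x| ≤ U x) (hvW : ∀ x, |v x| ≤ W x)
    (hU : Integrable (fun x => U x ^ 2 * w x) μ) (hW : Integrable (fun x => W x ^ 2 * w x) μ) :
    Integrable (fun x => u x * v x * w x) μ := by
  refine ((hU.add hW).div_const 2).mono' ((hu.mul hv).mul hw) (.of_forall fun x => ?_)
  have hUW : |u x| * |v x| ≤ (U x ^ 2 + W x ^ 2) / 2 := by
    nlinarith [sq_nonneg (U x - W x), abs_nonneg (u x), abs_nonneg (v x),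
      mul_le_mul (huU x) (hvW x) (abs_nonneg _) ((abs_nonneg _).trans (huU x))]
  rw [Real.norm_eq_abs, abs_mul, abs_mul, abs_of_nonneg (hw0 x)]
  calc |u x| * |v x| * w x ≤ (U x ^ 2 + W x ^ 2) / 2 * w x := by gcongr; exact hw0 x
    _ = (U x ^ 2 * w x + W x ^ 2 * w x) / 2 := by ring

lemma integral_mul_neg_of_nonpos {f w : α → ℝ} (hf : ∀ x, f x ≤ 0) (hw : ∀ x, 0 < w x)
    (hfw : Integrable (fun x => f x * w x) μ) (hpos : 0 < μ {x | f x < 0}) :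
    ∫ x, f x * w x ∂μ < 0 := by
  have hneg : 0 < ∫ x, -(f x * w x) ∂μ := by
    rw [integral_pos_iff_support_of_nonneg
      (fun x => neg_nonneg.2 (mul_nonpos_of_nonpos_of_nonneg (hf x) (hw x).le)) hfw.neg]
    exact hpos.trans_le (measure_mono fun x hx =>
      neg_ne_zero.2 (mul_neg_of_neg_of_pos hx (hw x)).ne)
  rw [integral_neg] at hneg
  linarith

end Integrable

section NormGaussian

variable {V : Type*} [NormedAddCommGroup V] [InnerProductSpace ℝ V] [FiniteDimensional ℝ V]
  [MeasurableSpace V] [BorelSpace V]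

lemma integrable_exp_neg_mul_sq_norm {b : ℝ} (hb : 0 < b) :
    Integrable (fun x : V => exp (-b * ‖x‖ ^ 2)) := by
  refine (GaussianFourier.integrable_cexp_neg_mul_sq_norm_add (V := V) (b := b)
    (by simpa using hb) 0 0).norm.congr (.of_forall fun x => ?_)
  simp [Complex.norm_exp, ← Complex.ofReal_pow, ← Complex.ofReal_mul]

lemma integrable_sq_norm_mul_exp_neg_mul_sq_norm {b : ℝ} (hb : 0 < b) :
    Integrable (fun x : V => ‖x‖ ^ 2 * exp (-b * ‖x‖ ^ 2)) := by
  refine ((integrable_exp_neg_mul_sq_norm (V := V) (half_pos hb)).const_mul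
    (2 / b * exp (-1))).mono' (by fun_prop) (.of_forall fun x => ?_)
  -- half of the exponent absorbs the factor `‖x‖²`, since `y e^{-y} ≤ e^{-1}`
  have key := mul_exp_neg_le_exp_neg_one (b / 2 * ‖x‖ ^ 2)
  have split : exp (-b * ‖x‖ ^ 2) = exp (-(b / 2 * ‖x‖ ^ 2)) * exp (-(b / 2) * ‖x‖ ^ 2) := by
    rw [← exp_add]; ring_nf
  rw [Real.norm_of_nonneg (by positivity), split]
  calc ‖x‖ ^ 2 * (exp (-(b / 2 * ‖x‖ ^ 2)) * exp (-(b / 2) * ‖x‖ ^ 2))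
      = 2 / b * (b / 2 * ‖x‖ ^ 2 * exp (-(b / 2 * ‖x‖ ^ 2))) * exp (-(b / 2) * ‖x‖ ^ 2) := by
        field_simp
    _ ≤ 2 / b * exp (-1) * exp (-(b / 2) * ‖x‖ ^ 2) := by gcongr

end NormGaussian

section GaussDensity

variable {p : ℕ} (θ : EuclideanSpace ℝ (Fin p)) {σ : ℝ}

lemma gaussDensity_eq (x : EuclideanSpace ℝ (Fin p)) :
    gaussDensity θ σ x =
      (2 * π * σ ^ 2) ^ (-(p : ℝ) / 2) * exp (-(2 * σ ^ 2)⁻¹ * ‖x - θ‖ ^ 2) := by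
  rw [gaussDensity]
  congr 2
  ring

lemma gaussDensity_pos (hσ : 0 < σ) (x : EuclideanSpace ℝ (Fin p)) :
    0 < gaussDensity θ σ x := by
  unfold gaussDensity
  positivity

lemma continuous_gaussDensity : Continuous (gaussDensity θ σ) := by
  unfold gaussDensity
  fun_prop

lemma integrable_gaussDensity (hσ : 0 < σ) : Integrable (gaussDensity θ σ) := by
  simp_rw [funext (gaussDensity_eq θ)]
  exact ((integrable_exp_neg_mul_sq_norm (by positivity)).comp_sub_right θ).const_mul _

lemma integrable_sq_norm_sub_mul_gaussDensity (hσ : 0 < σ) :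
    Integrable (fun x => ‖x - θ‖ ^ 2 * gaussDensity θ σ x) := by
  simp_rw [gaussDensity_eq θ, mul_left_comm _ (_ ^ (_ : ℝ))]
  exact ((integrable_sq_norm_mul_exp_neg_mul_sq_norm (by positivity)).comp_sub_right θ).const_mul _

lemma hasFDerivAt_gaussDensity (x : EuclideanSpace ℝ (Fin p)) :
    HasFDerivAt (gaussDensity θ σ) (-(gaussDensity θ σ x / σ ^ 2) • innerSL ℝ (x - θ)) x := by
  rw [funext (gaussDensity_eq θ)]
  refine (((((hasFDerivAt_id x).sub_const θ).norm_sq.const_mul (-(2 * σ ^ 2)⁻¹)).exp).const_mul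
    ((2 * π * σ ^ 2) ^ (-(p : ℝ) / 2))).congr_fderiv ?_
  ext v
  simp only [mul_inv_rev, id_eq, neg_mul, map_sub, ContinuousLinearMap.comp_id, neg_smul,
    smul_neg, neg_apply, smul_apply,
    sub_apply, coe_innerSL_apply, nsmul_eq_mul, Nat.cast_ofNat, smul_eq_mul,
    neg_inj]
  ring

lemma fderiv_gaussDensity_apply (x v : EuclideanSpace ℝ (Fin p)) :
    fderiv ℝ (gaussDensity θ σ) x v = -(σ ^ 2)⁻¹ * (⟪x - θ, v⟫ * gaussDensity θ σ x) := by
  rw [(hasFDerivAt_gaussDensity θ x).fderiv]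
  change -(gaussDensity θ σ x / σ ^ 2) * ⟪x - θ, v⟫ = _
  ring

end GaussDensity

section Stein

variable {p : ℕ} (θ : EuclideanSpace ℝ (Fin p)) {σ : ℝ}

lemma integral_inner_sub_mul_gaussDensity_eq (hσ : σ ≠ 0) {h : EuclideanSpace ℝ (Fin p) → ℝ}
    (hh : Differentiable ℝ h) (v : EuclideanSpace ℝ (Fin p))
    (hint : Integrable (fun x => h x * gaussDensity θ σ x))
    (hint_inner : Integrable (fun x => ⟪x - θ, v⟫ * h x * gaussDensity θ σ x))
    (hint_deriv : Integrable (fun x => fderiv ℝ h x v * gaussDensity θ σ x)) :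
    ∫ x, ⟪x - θ, v⟫ * h x * gaussDensity θ σ x =
      σ ^ 2 * ∫ x, fderiv ℝ h x v * gaussDensity θ σ x := by
  have hrw : ∀ x, h x * fderiv ℝ (gaussDensity θ σ) x v =
      -(σ ^ 2)⁻¹ * (⟪x - θ, v⟫ * h x * gaussDensity θ σ x) := fun x => by
    rw [fderiv_gaussDensity_apply]; ring
  have ibp := integral_mul_fderiv_eq_neg_fderiv_mul_of_integrable (μ := volume) hint_deriv
    ((hint_inner.const_mul _).congr (.of_forall fun x => (hrw x).symm)) hint
    (fun x _ => hh x) (fun x _ => (hasFDerivAt_gaussDensity θ x).differentiableAt)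
  simp_rw [hrw, integral_const_mul] at ibp
  field_simp at ibp
  exact neg_inj.mp ibp

variable {g : EuclideanSpace ℝ (Fin p) → EuclideanSpace ℝ (Fin p)}

lemma integrable_fderiv_apply_mul_gaussDensity (hσ : 0 < σ) (hg : ContDiff ℝ 1 g) (i : Fin p)
    (hint : Integrable
      (fun x => |fderiv ℝ g x (EuclideanSpace.single i 1) i| * gaussDensity θ σ x)) :
    Integrable (fun x => fderiv ℝ g x (EuclideanSpace.single i 1) i * gaussDensity θ σ x) := by
  refine Integrable.mul_of_abs_mul ?_ (continuous_gaussDensity θ).aestronglyMeasurable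
    (fun x => (gaussDensity_pos θ hσ x).le) hint
  exact ((EuclideanSpace.proj i).continuous.comp
    ((hg.continuous_fderiv one_ne_zero).clm_apply continuous_const)).aestronglyMeasurable

lemma integrable_vdiv_mul_gaussDensity (hσ : 0 < σ) (hg : ContDiff ℝ 1 g)
    (hint : ∀ i : Fin p, Integrable
      (fun x => |fderiv ℝ g x (EuclideanSpace.single i 1) i| * gaussDensity θ σ x)) :
    Integrable (fun x => vdiv g x * gaussDensity θ σ x) := by
  simp_rw [vdiv, Finset.sum_mul]
  exact integrable_finsetSum _ fun i _ =>
    integrable_fderiv_apply_mul_gaussDensity θ hσ hg i (hint i)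

lemma integral_inner_sub_mul_gaussDensity_eq_integral_vdiv (hσ : 0 < σ) (hg : ContDiff ℝ 1 g)
    (hint_sq : Integrable (fun x => ‖g x‖ ^ 2 * gaussDensity θ σ x))
    (hint_deriv : ∀ i : Fin p, Integrable
      (fun x => |fderiv ℝ g x (EuclideanSpace.single i 1) i| * gaussDensity θ σ x)) :
    ∫ x, ⟪x - θ, g x⟫ * gaussDensity θ σ x = σ ^ 2 * ∫ x, vdiv g x * gaussDensity θ σ x := by
  set e : Fin p → EuclideanSpace ℝ (Fin p) := fun i => EuclideanSpace.single i 1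
  have hφ := continuous_gaussDensity θ (σ := σ)
  have hφ0 : ∀ x, 0 ≤ gaussDensity θ σ x := fun x => (gaussDensity_pos θ hσ x).le
  have hgi : ∀ i, Continuous (fun x => g x i) := fun i =>
    (EuclideanSpace.proj i).continuous.comp hg.continuous
  have hgi_deriv : ∀ i x, HasFDerivAt (fun y => g y i)
      ((EuclideanSpace.proj i).comp (fderiv ℝ g x)) x := fun i x =>
    (EuclideanSpace.proj (𝕜 := ℝ) i).hasFDerivAt.comp x
      (hg.differentiable one_ne_zero x).hasFDerivAt
  have hint_inner : ∀ i, Integrable (fun x => ⟪x - θ, e i⟫ * g x i * gaussDensity θ σ x) :=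
    fun i => Integrable.mul_mul_of_abs_le (by fun_prop) (hgi i).aestronglyMeasurable
      hφ.aestronglyMeasurable hφ0 (U := fun x => ‖x - θ‖) (W := fun x => ‖g x‖)
      (fun x => by simpa [e] using abs_real_inner_le_norm (x - θ) (e i))
      (fun x => PiLp.norm_apply_le (g x) i)
      (integrable_sq_norm_sub_mul_gaussDensity θ hσ) hint_sq
  have hstein_coord : ∀ i, ∫ x, ⟪x - θ, e i⟫ * g x i * gaussDensity θ σ x =
      σ ^ 2 * ∫ x, fderiv ℝ g x (e i) i * gaussDensity θ σ x := fun i => by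
    have hint : Integrable (fun x => g x i * gaussDensity θ σ x) := by
      simpa using Integrable.mul_mul_of_abs_le aestronglyMeasurable_const
        (hgi i).aestronglyMeasurable hφ.aestronglyMeasurable hφ0
        (U := fun _ => 1) (W := fun x => ‖g x‖) (fun _ => le_of_eq abs_one)
        (fun x => PiLp.norm_apply_le (g x) i)
        (by simpa using integrable_gaussDensity θ hσ) hint_sq
    simpa [(hgi_deriv i _).fderiv] using integral_inner_sub_mul_gaussDensity_eq θ hσ.ne'
      (fun x => (hgi_deriv i x).differentiableAt) (e i) hint (hint_inner i)
      (by simpa [(hgi_deriv i _).fderiv] using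
        integrable_fderiv_apply_mul_gaussDensity θ hσ hg i (hint_deriv i))
  have hinner : ∀ x, ⟪x - θ, g x⟫ * gaussDensity θ σ x =
      ∑ i, ⟪x - θ, e i⟫ * g x i * gaussDensity θ σ x := fun x => by
    rw [← (EuclideanSpace.basisFun (Fin p) ℝ).sum_inner_mul_inner, Finset.sum_mul]
    simp [e, EuclideanSpace.basisFun_apply, EuclideanSpace.inner_single_left]
  calc ∫ x, ⟪x - θ, g x⟫ * gaussDensity θ σ x
      = ∑ i, ∫ x, ⟪x - θ, e i⟫ * g x i * gaussDensity θ σ x := by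
        simp_rw [hinner]
        exact integral_finsetSum _ fun i _ => hint_inner i
    _ = σ ^ 2 * ∫ x, vdiv g x * gaussDensity θ σ x := by
        simp_rw [hstein_coord, ← Finset.mul_sum, vdiv, Finset.sum_mul]
        rw [integral_finsetSum _ fun i _ =>
          integrable_fderiv_apply_mul_gaussDensity θ hσ hg i (hint_deriv i)]

end Stein

theorem stein_risk_normal_general (p : ℕ) (θ : EuclideanSpace ℝ (Fin p)) (σ : ℝ)
    (hσ : 0 < σ)
    (g : EuclideanSpace ℝ (Fin p) → EuclideanSpace ℝ (Fin p)) (hg : ContDiff ℝ 1 g)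
    (hint1 : Integrable (fun x => ‖g x‖ ^ 2 * gaussDensity θ σ x))
    (hint2 : Integrable (fun x => ⟪x - θ, g x⟫ * gaussDensity θ σ x))
    (hint3 : ∀ i : Fin p, Integrable
      (fun x => |fderiv ℝ g x (EuclideanSpace.single i 1) i| * gaussDensity θ σ x)) :
    (∫ x, ‖x + σ ^ 2 • g x - θ‖ ^ 2 * gaussDensity θ σ x =
        (∫ x, ‖x - θ‖ ^ 2 * gaussDensity θ σ x) +
          σ ^ 4 * ∫ x, (‖g x‖ ^ 2 + 2 * vdiv g x) * gaussDensity θ σ x) ∧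
      ((∀ x, ‖g x‖ ^ 2 + 2 * vdiv g x ≤ 0) →
        0 < volume {x | ‖g x‖ ^ 2 + 2 * vdiv g x < 0} →
          ∫ x, ‖x + σ ^ 2 • g x - θ‖ ^ 2 * gaussDensity θ σ x <
            ∫ x, ‖x - θ‖ ^ 2 * gaussDensity θ σ x) := by
  set φ := gaussDensity θ σ
  have hmom := integrable_sq_norm_sub_mul_gaussDensity θ hσ
  have hdiv := integrable_vdiv_mul_gaussDensity θ hσ hg hint3
  have hexpand : ∀ x, ‖x + σ ^ 2 • g x - θ‖ ^ 2 * φ x =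
      ‖x - θ‖ ^ 2 * φ x + 2 * σ ^ 2 * (⟪x - θ, g x⟫ * φ x) + σ ^ 4 * (‖g x‖ ^ 2 * φ x) := by
    intro x
    rw [add_sub_right_comm, norm_add_sq_real, real_inner_smul_right, norm_smul,
      norm_of_nonneg (sq_nonneg σ)]
    ring
  have hsplit : ∀ x, (‖g x‖ ^ 2 + 2 * vdiv g x) * φ x = ‖g x‖ ^ 2 * φ x + 2 * (vdiv g x * φ x) :=
    fun x => by ring
  have hrisk : ∫ x, ‖x + σ ^ 2 • g x - θ‖ ^ 2 * φ x =
      (∫ x, ‖x - θ‖ ^ 2 * φ x) + σ ^ 4 * ∫ x, (‖g x‖ ^ 2 + 2 * vdiv g x) * φ x := by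
    simp_rw [hexpand, hsplit]
    rw [integral_add ?_ (hint1.const_mul _), integral_add hmom (hint2.const_mul _),
      integral_add hint1 (hdiv.const_mul _), integral_const_mul, integral_const_mul,
      integral_const_mul, integral_inner_sub_mul_gaussDensity_eq_integral_vdiv θ hσ hg hint1 hint3]
    · ring
    · exact hmom.add (hint2.const_mul _)
  refine ⟨hrisk, fun hle hlt => ?_⟩
  have hneg := integral_mul_neg_of_nonpos hle (gaussDensity_pos θ hσ)
    ((hint1.add (hdiv.const_mul 2)).congr (.of_forall fun x => (hsplit x).symm)) hlt
  rw [hrisk]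
  nlinarith [pow_pos hσ 4]

/-- **Proposition 3.1**: if `X ~ N(θ, σ²I)` and `g` is continuously differentiable with the
relevant integrability conditions, then the risk of `X + σ²g(X)` is
`E‖X - θ‖² + σ⁴ E[‖g(X)‖² + 2 div g(X)]`; consequently, if `‖g‖² + 2 div g ≤ 0` everywhere
with strict inequality on a set of positive Lebesgue measure, then `X + σ²g(X)` dominates `X`
under squared error loss. -/
theorem stein_risk_normal (p : ℕ) (hp : 1 ≤ p) (θ : EuclideanSpace ℝ (Fin p)) (σ : ℝ)
    (hσ : 0 < σ)
    (g : EuclideanSpace ℝ (Fin p) → EuclideanSpace ℝ (Fin p)) (hg : ContDiff ℝ 1 g)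
    (hint1 : Integrable (fun x => ‖g x‖ ^ 2 * gaussDensity θ σ x))
    (hint2 : Integrable (fun x => ⟪x - θ, g x⟫ * gaussDensity θ σ x))
    (hint3 : ∀ i : Fin p, Integrable
      (fun x => |fderiv ℝ g x (EuclideanSpace.single i 1) i| * gaussDensity θ σ x)) :
    (∫ x, ‖x + σ ^ 2 • g x - θ‖ ^ 2 * gaussDensity θ σ x =
        (∫ x, ‖x - θ‖ ^ 2 * gaussDensity θ σ x) +
          σ ^ 4 * ∫ x, (‖g x‖ ^ 2 + 2 * vdiv g x) * gaussDensity θ σ x) ∧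
      ((∀ x, ‖g x‖ ^ 2 + 2 * vdiv g x ≤ 0) →
        0 < volume {x | ‖g x‖ ^ 2 + 2 * vdiv g x < 0} →
          ∫ x, ‖x + σ ^ 2 • g x - θ‖ ^ 2 * gaussDensity θ σ x <
            ∫ x, ‖x - θ‖ ^ 2 * gaussDensity θ σ x) :=
  stein_risk_normal_general p θ σ hσ g hg hint1 hint2 hint3
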